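/- Let S be a decision rule system with n(S) > 0 and let S′ = R_AD(S). Then max{d(S′), β_EAD(S′)} ≤ h_EAD(S) ≤ d(S′)·β_EAD⁺(S′). -/

import Mathlib

/- Common formal framework for decision rule systems and decision trees /
   acyclic decision graphs, following Durdymyradov & Moshkov. -/

attribute [local instance] Classical.propDecidable

noncomputable section

namespace DRS

/-- A decision rule `(a_{i₁}=δ₁) ∧ ⋯ ∧ (a_{i_m}=δ_m) → σ`:
`K` is the finite set of equations (attribute index, value), `rhs` is σ. -/
structure Rule where
  K : Finset (ℕ × ℕ)
  rhs : ℕ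

/-- Well-formedness of a rule: the attributes on its left-hand side are pairwise different. -/
def Rule.WF (r : Rule) : Prop := ∀ p ∈ r.K, ∀ q ∈ r.K, p.1 = q.1 → p = q

/-- A(r): the set of attributes of a rule. -/
def Rule.attrs (r : Rule) : Finset ℕ := r.K.image Prod.fst

/-- The length m of a rule. -/
def Rule.len (r : Rule) : ℕ := r.K.card

/-- A(S) -/
def attrs (S : Finset Rule) : Finset ℕ := S.biUnion Rule.attrs

/-- n(S) -/
def nPar (S : Finset Rule) : ℕ := (attrs S).card

/-- d(S): the maximum length of a rule of S. -/
def dPar (S : Finset Rule) : ℕ := S.sup Rule.len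

/-- D(S): the set of right-hand sides. -/
def rhsSet (S : Finset Rule) : Finset ℕ := S.image Rule.rhs

/-- V_S(a_i) -/
def VS (S : Finset Rule) (i : ℕ) : Finset ℕ :=
  ((S.biUnion Rule.K).filter fun p => p.1 = i).image Prod.snd

/-- k(S) -/
def kPar (S : Finset Rule) : ℕ := (attrs S).sup fun i => (VS S i).card

/-- Attribute values in trees are `Option ℕ`; `none` plays the role of the special value `*`.
`allowed S false i` is (the lift of) `V_S(a_i)`, and `allowed S true i` is `EV_S(a_i)`. -/
def allowed (S : Finset Rule) (ext : Bool) (i : ℕ) : Finset (Option ℕ) :=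
  (VS S i).image some ∪ (if ext then {none} else ∅)

/-- Consistency of an equation system over ω ∪ {*}. -/
def ConsistentE (E : Finset (ℕ × Option ℕ)) : Prop :=
  ∀ p ∈ E, ∀ q ∈ E, p.1 = q.1 → p.2 = q.2

/-- Lift the left-hand side of a rule to an equation system over ω ∪ {*}. -/
def liftK (K : Finset (ℕ × ℕ)) : Finset (ℕ × Option ℕ) :=
  K.image fun p => (p.1, some p.2)

/-- A finite directed labeled graph: the nodes are `0, …, n-1`, with a distinguished root,
each node carries either an attribute (working node) or a set of rules (terminal node),
and edges are labeled with elements of ω ∪ {*}. -/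
structure DGraph where
  n : ℕ
  root : ℕ
  label : ℕ → ℕ ⊕ Finset Rule
  edges : Finset (ℕ × Option ℕ × ℕ)

namespace DGraph

def step (G : DGraph) (u v : ℕ) : Prop := ∃ l, (u, l, v) ∈ G.edges

/-- The graph has no directed cycles. -/
def Acyclic (G : DGraph) : Prop := ∀ v, ¬ Relation.TransGen G.step v v

/-- A node is terminal if no edge leaves it. -/
def IsTerminal (G : DGraph) (v : ℕ) : Prop := ∀ e ∈ G.edges, e.1 ≠ v

/-- The set of rules attached to a (terminal) node. -/
def termSet (G : DGraph) (v : ℕ) : Finset Rule :=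
  Sum.elim (fun _ => (∅ : Finset Rule)) id (G.label v)

/-- `G` is an acyclic decision graph over the rule system `S`;
`ext = false` : branching over `V_S` (o-type), `ext = true` : branching over `EV_S` (e-type).
Terminal nodes are labeled with subsets of S; each working node is labeled with an
attribute `a` of `A(S)` and has exactly one leaving edge for every element of
`V_S(a)` (resp. `EV_S(a)`), the edges leaving it being labeled with these
pairwise different elements. -/
def IsDG (G : DGraph) (S : Finset Rule) (ext : Bool) : Prop :=
  G.root < G.n ∧
  (∀ e ∈ G.edges, e.1 < G.n ∧ e.2.2 < G.n) ∧
  G.Acyclic ∧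
  (∀ v < G.n,
    if G.IsTerminal v then
      ∃ Z : Finset Rule, G.label v = Sum.inr Z ∧ Z ⊆ S
    else
      ∃ a : ℕ, G.label v = Sum.inl a ∧ a ∈ attrs S ∧
        (∀ l : Option ℕ, (∃ w, (v, l, w) ∈ G.edges) ↔ l ∈ allowed S ext a) ∧
        (∀ l w w', (v, l, w) ∈ G.edges → (v, l, w') ∈ G.edges → w = w'))

/-- `G` is a finite directed tree with root: the root has no entering edge and every
other node has exactly one entering edge (together with acyclicity this makes the
graph a rooted tree). -/
def IsTree (G : DGraph) : Prop :=
  (∀ e ∈ G.edges, e.2.2 ≠ G.root) ∧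
  (∀ v < G.n, v ≠ G.root → ∃! e, e ∈ G.edges ∧ e.2.2 = v)

/-- `chainFrom G v p t`: the list `p` of (node, leaving-edge-label) pairs forms a
directed path in `G` starting at `v` and ending at `t`. -/
def chainFrom (G : DGraph) : ℕ → List (ℕ × Option ℕ) → ℕ → Prop
  | v, [], t => v = t
  | v, e :: rest, t => e.1 = v ∧ ∃ w, (v, e.2, w) ∈ G.edges ∧ chainFrom G w rest t

/-- A complete path: from the root to a terminal node; it is recorded by the list of
its working nodes with the labels of the edges taken, together with its terminal node. -/
def IsCompletePath (G : DGraph) (p : List (ℕ × Option ℕ)) (t : ℕ) : Prop :=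
  G.chainFrom G.root p t ∧ G.IsTerminal t ∧ t < G.n

/-- K(ξ): the equation system associated with a complete path. -/
def pathEqs (G : DGraph) (p : List (ℕ × Option ℕ)) : Finset (ℕ × Option ℕ) :=
  (p.filterMap fun e =>
    Sum.elim (fun a => some (a, e.2)) (fun _ => none) (G.label e.1)).toFinset

/-- L(Γ): the number of nodes. -/
def size (G : DGraph) : ℕ := G.n

/-- T(Γ): the number of terminal nodes labeled with pairwise different sets of rules. -/
def tCount (G : DGraph) : ℕ :=
  (((Finset.range G.n).filter fun v => G.IsTerminal v).image fun v => G.termSet v).card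

/-- h(Γ): the maximum number of working nodes on a complete path. -/
def depth (G : DGraph) : ℕ :=
  sSup {m | ∃ p t, G.IsCompletePath p t ∧ p.length = m}

/-- Path conditions for (the solutions of) the problems All Rules / EAll Rules. -/
def SolvesAR (G : DGraph) (S : Finset Rule) : Prop :=
  ∀ p t, G.IsCompletePath p t → ConsistentE (G.pathEqs p) →
    (∀ r ∈ G.termSet t, liftK r.K ⊆ G.pathEqs p) ∧
    (∀ r ∈ S, r ∉ G.termSet t → ¬ ConsistentE (liftK r.K ∪ G.pathEqs p))

/-- Path conditions for the problems All Decisions / EAll Decisions. -/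
def SolvesAD (G : DGraph) (S : Finset Rule) : Prop :=
  ∀ p t, G.IsCompletePath p t → ConsistentE (G.pathEqs p) →
    (∀ r ∈ G.termSet t, liftK r.K ⊆ G.pathEqs p) ∧
    (∀ r ∈ S, r ∉ G.termSet t → r.rhs ∉ (G.termSet t).image Rule.rhs →
      ¬ ConsistentE (liftK r.K ∪ G.pathEqs p))

/-- Path conditions for the problems Some Rules / ESome Rules. -/
def SolvesSR (G : DGraph) (S : Finset Rule) : Prop :=
  ∀ p t, G.IsCompletePath p t → ConsistentE (G.pathEqs p) →
    (∀ r ∈ G.termSet t, liftK r.K ⊆ G.pathEqs p) ∧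
    (G.termSet t = ∅ → ∀ r ∈ S, ¬ ConsistentE (liftK r.K ∪ G.pathEqs p))

end DGraph

/-- Γ is a decision tree over S solving AR(S) (an o-tree). -/
def TreeSolvesAR (S : Finset Rule) (G : DGraph) : Prop :=
  G.IsDG S false ∧ G.IsTree ∧ G.SolvesAR S
/-- Γ is a decision tree over S solving EAR(S) (an e-tree). -/
def TreeSolvesEAR (S : Finset Rule) (G : DGraph) : Prop :=
  G.IsDG S true ∧ G.IsTree ∧ G.SolvesAR S
/-- Γ is a decision tree over S solving AD(S) (an o-tree). -/
def TreeSolvesAD (S : Finset Rule) (G : DGraph) : Prop :=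
  G.IsDG S false ∧ G.IsTree ∧ G.SolvesAD S
/-- Γ is a decision tree over S solving EAD(S) (an e-tree). -/
def TreeSolvesEAD (S : Finset Rule) (G : DGraph) : Prop :=
  G.IsDG S true ∧ G.IsTree ∧ G.SolvesAD S
/-- Γ is a decision tree over S solving SR(S) (an o-tree). -/
def TreeSolvesSR (S : Finset Rule) (G : DGraph) : Prop :=
  G.IsDG S false ∧ G.IsTree ∧ G.SolvesSR S
/-- Γ is a decision tree over S solving ESR(S) (an e-tree). -/
def TreeSolvesESR (S : Finset Rule) (G : DGraph) : Prop :=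
  G.IsDG S true ∧ G.IsTree ∧ G.SolvesSR S

/-- L_AR(S): minimum number of nodes of a decision tree over S solving AR(S). -/
def L_AR (S : Finset Rule) : ℕ := sInf {m | ∃ G : DGraph, TreeSolvesAR S G ∧ G.size = m}
def L_EAR (S : Finset Rule) : ℕ := sInf {m | ∃ G : DGraph, TreeSolvesEAR S G ∧ G.size = m}
def L_AD (S : Finset Rule) : ℕ := sInf {m | ∃ G : DGraph, TreeSolvesAD S G ∧ G.size = m}
def L_EAD (S : Finset Rule) : ℕ := sInf {m | ∃ G : DGraph, TreeSolvesEAD S G ∧ G.size = m}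
def L_SR (S : Finset Rule) : ℕ := sInf {m | ∃ G : DGraph, TreeSolvesSR S G ∧ G.size = m}
def L_ESR (S : Finset Rule) : ℕ := sInf {m | ∃ G : DGraph, TreeSolvesESR S G ∧ G.size = m}

/-- T_AR(S): minimum number of differently-labeled terminal nodes of a decision tree
over S solving AR(S); similarly for the other problems. -/
def T_AR (S : Finset Rule) : ℕ := sInf {m | ∃ G : DGraph, TreeSolvesAR S G ∧ G.tCount = m}
def T_EAR (S : Finset Rule) : ℕ := sInf {m | ∃ G : DGraph, TreeSolvesEAR S G ∧ G.tCount = m}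
def T_AD (S : Finset Rule) : ℕ := sInf {m | ∃ G : DGraph, TreeSolvesAD S G ∧ G.tCount = m}
def T_EAD (S : Finset Rule) : ℕ := sInf {m | ∃ G : DGraph, TreeSolvesEAD S G ∧ G.tCount = m}
def T_SR (S : Finset Rule) : ℕ := sInf {m | ∃ G : DGraph, TreeSolvesSR S G ∧ G.tCount = m}
def T_ESR (S : Finset Rule) : ℕ := sInf {m | ∃ G : DGraph, TreeSolvesESR S G ∧ G.tCount = m}

/-- h_AR(S): minimum depth of a decision tree over S solving AR(S); similarly for the others. -/
def h_AR (S : Finset Rule) : ℕ := sInf {m | ∃ G : DGraph, TreeSolvesAR S G ∧ G.depth = m}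
def h_EAR (S : Finset Rule) : ℕ := sInf {m | ∃ G : DGraph, TreeSolvesEAR S G ∧ G.depth = m}
def h_AD (S : Finset Rule) : ℕ := sInf {m | ∃ G : DGraph, TreeSolvesAD S G ∧ G.depth = m}
def h_EAD (S : Finset Rule) : ℕ := sInf {m | ∃ G : DGraph, TreeSolvesEAD S G ∧ G.depth = m}
def h_SR (S : Finset Rule) : ℕ := sInf {m | ∃ G : DGraph, TreeSolvesSR S G ∧ G.depth = m}
def h_ESR (S : Finset Rule) : ℕ := sInf {m | ∃ G : DGraph, TreeSolvesESR S G ∧ G.depth = m}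

/-- L^DG_SR(S): minimum number of nodes of an acyclic decision graph solving SR(S). -/
def LDG_SR (S : Finset Rule) : ℕ :=
  sInf {m | ∃ G : DGraph, G.IsDG S false ∧ G.SolvesSR S ∧ G.size = m}
/-- L^DG_ESR(S): minimum number of nodes of an acyclic decision graph solving ESR(S). -/
def LDG_ESR (S : Finset Rule) : ℕ :=
  sInf {m | ∃ G : DGraph, G.IsDG S true ∧ G.SolvesSR S ∧ G.size = m}

/-- A node cover of the hypergraph G(S). -/
def IsNodeCover (S : Finset Rule) (B : Finset ℕ) : Prop :=
  B ⊆ attrs S ∧ ∀ r ∈ S, (Rule.attrs r).Nonempty → (Rule.attrs r ∩ B).Nonempty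

/-- β(S): the minimum cardinality of a node cover of the hypergraph G(S). -/
def beta (S : Finset Rule) : ℕ := sInf {c | ∃ B, IsNodeCover S B ∧ B.card = c}

/-- S⁺: the subsystem of S consisting of all rules of length d(S). -/
def Splus (S : Finset Rule) : Finset Rule := S.filter fun r => r.len = dPar S

/-- β⁺(S) = β(S⁺). -/
def betaPlus (S : Finset Rule) : ℕ := beta (Splus S)

/-- The rule r_α : delete from the left-hand side of r all equations belonging to α. -/
def Rule.restrict (r : Rule) (α : Finset (ℕ × Option ℕ)) : Rule :=
  ⟨r.K.filter fun p => (p.1, some p.2) ∉ α, r.rhs⟩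

/-- S_α : the system of the rules r_α for all r ∈ S with K(r) ∪ α consistent. -/
def restrict (S : Finset Rule) (α : Finset (ℕ × Option ℕ)) : Finset Rule :=
  (S.filter fun r => ConsistentE (liftK r.K ∪ α)).image fun r => r.restrict α

/-- E_C(S): consistent equation systems whose attributes are in A(S) and whose
values belong to V_S (ext = false) resp. EV_S (ext = true). -/
def ESys (S : Finset Rule) (ext : Bool) : Set (Finset (ℕ × Option ℕ)) :=
  {α | ConsistentE α ∧ ∀ p ∈ α, p.1 ∈ attrs S ∧ p.2 ∈ allowed S ext p.1}

/-- I_SR(S). -/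
def I_SR (S : Finset Rule) : Finset Rule :=
  if ∃ r ∈ S, r.len = 0 then S.filter fun r => r.len = 0 else S

/-- D₀(S): the right-hand sides of the rules of S of length 0. -/
def D0 (S : Finset Rule) : Finset ℕ := (S.filter fun r => r.len = 0).image Rule.rhs

/-- I_AD(S). -/
def I_AD (S : Finset Rule) : Finset Rule :=
  S.filter fun r => r.len = 0 ∨ r.rhs ∉ D0 S

def betaC (S : Finset Rule) (ext : Bool) : ℕ :=
  sSup {b | ∃ α ∈ ESys S ext, beta (restrict S α) = b}
def betaCplus (S : Finset Rule) (ext : Bool) : ℕ :=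
  sSup {b | ∃ α ∈ ESys S ext, betaPlus (restrict S α) = b}
def betaI (S : Finset Rule) (I : Finset Rule → Finset Rule) : ℕ :=
  sSup {b | ∃ α ∈ ESys S true, beta (I (restrict S α)) = b}
def betaIplus (S : Finset Rule) (I : Finset Rule → Finset Rule) : ℕ :=
  sSup {b | ∃ α ∈ ESys S true, betaPlus (I (restrict S α)) = b}

def beta_AR (S : Finset Rule) : ℕ := betaC S false
def beta_AD (S : Finset Rule) : ℕ := betaC S false
def beta_SR (S : Finset Rule) : ℕ := betaC S false
def beta_EAR (S : Finset Rule) : ℕ := betaC S true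
def beta_ARplus (S : Finset Rule) : ℕ := betaCplus S false
def beta_ADplus (S : Finset Rule) : ℕ := betaCplus S false
def beta_SRplus (S : Finset Rule) : ℕ := betaCplus S false
def beta_EARplus (S : Finset Rule) : ℕ := betaCplus S true
def beta_EAD (S : Finset Rule) : ℕ := betaI S I_AD
def beta_EADplus (S : Finset Rule) : ℕ := betaIplus S I_AD
def beta_ESR (S : Finset Rule) : ℕ := betaI S I_SR
def beta_ESRplus (S : Finset Rule) : ℕ := betaIplus S I_SR

/-- R_SR(S). -/
def R_SR (S : Finset Rule) : Finset Rule :=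
  S.filter fun r => ¬ ∃ r' ∈ S, r'.K ⊂ r.K

/-- R_AD(S). -/
def R_AD (S : Finset Rule) : Finset Rule :=
  S.filter fun r => ¬ ∃ r' ∈ S, r'.K ⊂ r.K ∧ r'.rhs = r.rhs

/-- A reduced decision rule system. -/
def Reduced (S : Finset Rule) : Prop :=
  attrs S ⊆ Finset.range (nPar S + 1) ∧
  rhsSet S ⊆ Finset.range ((rhsSet S).card + 1) ∧
  (∀ i ∈ attrs S, VS S i ⊆ Finset.range (kPar S + 1)) ∧
  1 ≤ dPar S

/-- Length of the binary representation of a natural number. -/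
def bitLen (m : ℕ) : ℕ := max 1 (Nat.size m)

/-- The length of the word "(a⟨i⟩=⟨δ⟩)" encoding one equation. -/
def eqLen (p : ℕ × ℕ) : ℕ := 4 + bitLen p.1 + bitLen p.2

/-- The length of the word encoding one rule (with the "∧" signs and "→"). -/
def Rule.wordLen (r : Rule) : ℕ :=
  (∑ p ∈ r.K, eqLen p) + (r.K.card - 1) + 1 + bitLen r.rhs

/-- size(S): the length of the word representing S (with ";" separating the rules). -/
def sizeS (S : Finset Rule) : ℕ := (∑ r ∈ S, r.wordLen) + (S.card - 1)

/-!
Write `S' = R_AD S`. For the lower bounds, run a tree solving EAD(S) along the path that answers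
every query by a prescribed assignment, with `*` for unassigned attributes. A rule of `S` that
stays compatible with the path must have its decision certified by a rule whose whole left-hand
side was observed, and shrinking that rule to one with a minimal left-hand side puts it into `S'`.
Following a longest rule `r` of `S'`, minimality of `r` in `R_AD` forces all of `K(r)` onto the
path, so the depth is at least `d(S')`. Following `α ∈ E_EAD(S')`, the attributes of the path
meet every nonempty rule of `I_EAD(S'_α)`: a rule they miss would get certified by a rule of `S'`
whose left-hand side lies in `α`, which puts its decision into `D₀(S'_α)` and removes it from
`I_EAD(S'_α)`.

For the upper bound the tree works in phases, keeping the equations `α` observed so far, with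
answers outside `V_{S'}` recorded as `*`. A phase queries a minimum node cover of the longest
rules of `I_EAD(S'_α)`, which costs at most `β⁺_EAD(S')` queries. After the phase each of these
rules has lost an equation or left `I_EAD`, so `d(I_EAD(S'_α))` drops. After at most `d(S')`
phases it is `0`, and the rules of `S` whose left-hand sides lie in `α` form the answer. The trees
are built as an inductive type and numbered in preorder to obtain a `DGraph`.
-/

section EquationSystems

lemma ConsistentE.subset {A B : Finset (ℕ × Option ℕ)} (hB : ConsistentE B) (h : A ⊆ B) :
    ConsistentE A :=
  fun p hp q hq => hB p (h hp) q (h hq)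

lemma consistentE_empty : ConsistentE ∅ := by
  simp [ConsistentE]

lemma consistentE_of_forall_eq {E : Finset (ℕ × Option ℕ)} {f : ℕ → Option ℕ}
    (h : ∀ q ∈ E, q.2 = f q.1) : ConsistentE E := by
  intro p hp q hq hpq
  rw [h p hp, h q hq, hpq]

lemma ConsistentE.union {A B : Finset (ℕ × Option ℕ)} (hA : ConsistentE A) (hB : ConsistentE B)
    (hAB : ∀ p ∈ A, ∀ q ∈ B, p.1 = q.1 → p.2 = q.2) : ConsistentE (A ∪ B) := by
  intro p hp q hq hpq
  rcases Finset.mem_union.1 hp with hp | hp <;> rcases Finset.mem_union.1 hq with hq | hq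
  · exact hA p hp q hq hpq
  · exact hAB p hp q hq hpq
  · exact (hAB q hq p hp hpq.symm).symm
  · exact hB p hp q hq hpq

lemma ConsistentE.insert {E : Finset (ℕ × Option ℕ)} (hE : ConsistentE E) {a : ℕ}
    (ha : ∀ v, (a, v) ∉ E) (l : Option ℕ) : ConsistentE (insert (a, l) E) := by
  refine ConsistentE.union (A := {(a, l)}) ?_ hE ?_
  · simp [ConsistentE]
  · rintro p hp ⟨b, v⟩ hq (rfl : p.1 = b)
    simp only [Finset.mem_singleton] at hp
    subst hp
    exact absurd hq (ha v)

lemma mem_liftK {K : Finset (ℕ × ℕ)} {q : ℕ × Option ℕ} :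
    q ∈ liftK K ↔ ∃ δ, (q.1, δ) ∈ K ∧ q.2 = some δ := by
  obtain ⟨a, v⟩ := q
  simp only [liftK, Finset.mem_image, Prod.mk.injEq, Prod.exists]
  constructor
  · rintro ⟨b, δ, h, rfl, rfl⟩
    exact ⟨δ, h, rfl⟩
  · rintro ⟨δ, h, rfl⟩
    exact ⟨a, δ, h, rfl, rfl⟩

lemma liftK_subset_liftK {K K' : Finset (ℕ × ℕ)} : liftK K ⊆ liftK K' ↔ K ⊆ K' := by
  refine ⟨fun h p hp => ?_, Finset.image_subset_image⟩
  obtain ⟨δ, hδ, hv⟩ := mem_liftK.1 (h (Finset.mem_image_of_mem _ hp))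
  cases hv
  exact hδ

lemma card_liftK (K : Finset (ℕ × ℕ)) : (liftK K).card = K.card :=
  Finset.card_image_of_injective _ fun p q h => by simpa [Prod.ext_iff] using h

lemma Rule.WF.consistentE_liftK {r : Rule} (h : r.WF) : ConsistentE (liftK r.K) := by
  intro p hp q hq hpq
  obtain ⟨δ, hδ, hp2⟩ := mem_liftK.1 hp
  obtain ⟨δ', hδ', hq2⟩ := mem_liftK.1 hq
  rw [hp2, hq2]
  exact congrArg some (Prod.ext_iff.1 (h _ hδ _ hδ' hpq)).2

lemma mem_VS {S : Finset Rule} {r : Rule} (hr : r ∈ S) {a δ : ℕ} (h : (a, δ) ∈ r.K) :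
    δ ∈ VS S a :=
  Finset.mem_image.2 ⟨(a, δ), Finset.mem_filter.2 ⟨Finset.mem_biUnion.2 ⟨r, hr, h⟩, rfl⟩, rfl⟩

lemma VS_mono {S S' : Finset Rule} (h : S' ⊆ S) (i : ℕ) : VS S' i ⊆ VS S i :=
  Finset.image_subset_image (Finset.filter_subset_filter _
    (Finset.biUnion_subset_biUnion_of_subset_left _ h))

lemma none_mem_allowed (S : Finset Rule) (i : ℕ) : none ∈ allowed S true i := by
  simp [allowed]

lemma some_mem_allowed {S : Finset Rule} {i δ : ℕ} (h : δ ∈ VS S i) (ext : Bool) :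
    some δ ∈ allowed S ext i :=
  Finset.mem_union_left _ (Finset.mem_image_of_mem _ h)

lemma allowed_mono {S S' : Finset Rule} (h : S' ⊆ S) (i : ℕ) :
    allowed S' true i ⊆ allowed S true i :=
  Finset.union_subset_union (Finset.image_subset_image (VS_mono h i)) subset_rfl

lemma attrs_mono {S S' : Finset Rule} (h : S' ⊆ S) : attrs S' ⊆ attrs S :=
  Finset.biUnion_subset_biUnion_of_subset_left _ h

/-- An unassigned attribute gets the value `*`. -/
def assignOf (E : Finset (ℕ × Option ℕ)) (a : ℕ) : Option ℕ :=
  if h : ∃ v, (a, v) ∈ E then h.choose else none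

lemma assignOf_eq {E : Finset (ℕ × Option ℕ)} (hE : ConsistentE E) {a : ℕ} {v : Option ℕ}
    (h : (a, v) ∈ E) : assignOf E a = v := by
  have hex : ∃ v, (a, v) ∈ E := ⟨v, h⟩
  rw [assignOf, dif_pos hex]
  exact hE _ hex.choose_spec _ h rfl

lemma mem_of_assignOf_eq_some {E : Finset (ℕ × Option ℕ)} {a δ : ℕ}
    (h : assignOf E a = some δ) : (a, some δ) ∈ E := by
  unfold assignOf at h
  split_ifs at h with hex
  rw [← h]
  exact hex.choose_spec

lemma assignOf_mem_allowed {S : Finset Rule} {E : Finset (ℕ × Option ℕ)}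
    (hE : ∀ p ∈ E, p.2 ∈ allowed S true p.1) (a : ℕ) : assignOf E a ∈ allowed S true a := by
  unfold assignOf
  split_ifs with hex
  · exact hE (a, hex.choose) hex.choose_spec
  · exact none_mem_allowed S a

lemma liftK_subset_of_agree {E P : Finset (ℕ × Option ℕ)} (hP : ∀ q ∈ P, q.2 = assignOf E q.1)
    {K : Finset (ℕ × ℕ)} (hK : liftK K ⊆ P) : liftK K ⊆ E := by
  intro q hq
  obtain ⟨δ, -, hδ⟩ := mem_liftK.1 hq
  have := mem_of_assignOf_eq_some ((hP q (hK hq)).symm.trans hδ)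
  rwa [← hδ] at this

end EquationSystems

namespace DGraph

variable {G : DGraph}

lemma chainFrom_edges :
    ∀ {p : List (ℕ × Option ℕ)} {v u : ℕ}, G.chainFrom v p u → ∀ e ∈ p, ∃ w, (e.1, e.2, w) ∈ G.edges
  | [], _, _, _, _, he => absurd he List.not_mem_nil
  | e' :: _, _, _, ⟨h1, w, hw, hrest⟩, e, he => by
    rcases List.mem_cons.1 he with rfl | he
    · exact ⟨w, h1 ▸ hw⟩
    · exact chainFrom_edges hrest e he

lemma chainFrom_reaches :
    ∀ {p : List (ℕ × Option ℕ)} {v u : ℕ}, G.chainFrom v p u →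
      ∀ x ∈ p.map Prod.fst, Relation.ReflTransGen G.step v x
  | [], _, _, _, _, hx => absurd hx List.not_mem_nil
  | e' :: _, _, _, ⟨h1, _, hw, hrest⟩, x, hx => by
    rcases List.mem_cons.1 hx with rfl | hx
    · rw [h1]
    · exact Relation.ReflTransGen.head ⟨e'.2, hw⟩ (chainFrom_reaches hrest x hx)

lemma chainFrom_nodup (hac : G.Acyclic) :
    ∀ {p : List (ℕ × Option ℕ)} {v u : ℕ}, G.chainFrom v p u → (p.map Prod.fst).Nodup
  | [], _, _, _ => List.nodup_nil
  | e' :: _, v, _, ⟨h1, _, hw, hrest⟩ => by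
    refine List.nodup_cons.2 ⟨fun hmem => ?_, chainFrom_nodup hac hrest⟩
    have hback := chainFrom_reaches hrest _ hmem
    rw [h1] at hback
    exact hac v (Relation.TransGen.head' ⟨e'.2, hw⟩ hback)

/-- On an acyclic graph a path visits every node at most once. -/
lemma IsCompletePath.length_le {S : Finset Rule} {ext : Bool} (hG : G.IsDG S ext)
    {p : List (ℕ × Option ℕ)} {t : ℕ} (hp : G.IsCompletePath p t) : p.length ≤ G.n := by
  have hsub : (p.map Prod.fst).toFinset ⊆ Finset.range G.n := by
    intro x hx
    obtain ⟨e, he, rfl⟩ := List.mem_map.1 (List.mem_toFinset.1 hx)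
    obtain ⟨w, hw⟩ := chainFrom_edges hp.1 e he
    exact Finset.mem_range.2 (hG.2.1 _ hw).1
  calc p.length = (p.map Prod.fst).toFinset.card := by
        rw [List.toFinset_card_of_nodup (chainFrom_nodup hG.2.2.1 hp.1), List.length_map]
    _ ≤ G.n := by simpa using Finset.card_le_card hsub

lemma IsCompletePath.length_le_depth {S : Finset Rule} {ext : Bool} (hG : G.IsDG S ext)
    {p : List (ℕ × Option ℕ)} {t : ℕ} (hp : G.IsCompletePath p t) : p.length ≤ G.depth :=
  le_csSup ⟨G.n, by rintro _ ⟨p', t', hp', rfl⟩; exact hp'.length_le hG⟩ ⟨p, t, hp, rfl⟩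

lemma pathEqs_nil : G.pathEqs [] = ∅ := rfl

lemma pathEqs_cons_of_label_eq {e : ℕ × Option ℕ} {p : List (ℕ × Option ℕ)} {a : ℕ}
    (h : G.label e.1 = Sum.inl a) : G.pathEqs (e :: p) = insert (a, e.2) (G.pathEqs p) := by
  simp [pathEqs, h]

lemma card_pathEqs_le (p : List (ℕ × Option ℕ)) : (G.pathEqs p).card ≤ p.length :=
  (List.toFinset_card_le _).trans (List.length_filterMap_le _ _)

lemma termSet_subset {S : Finset Rule} {ext : Bool} (hG : G.IsDG S ext) {u : ℕ}
    (hu : G.IsTerminal u) (hun : u < G.n) : G.termSet u ⊆ S := by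
  have h := hG.2.2.2 u hun
  rw [if_pos hu] at h
  obtain ⟨Z, hZ, hZS⟩ := h
  simpa [termSet, hZ] using hZS

def reach (G : DGraph) (v : ℕ) : Finset ℕ :=
  (Finset.range G.n).filter fun w => Relation.ReflTransGen G.step v w

lemma card_reach_lt {v w : ℕ} (hac : G.Acyclic) (hv : v < G.n) (h : G.step v w) :
    (reach G w).card < (reach G v).card := by
  refine Finset.card_lt_card ⟨fun x hx => ?_, fun hsub => ?_⟩
  · obtain ⟨hx1, hx2⟩ := Finset.mem_filter.1 hx
    exact Finset.mem_filter.2 ⟨hx1, Relation.ReflTransGen.head h hx2⟩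
  · have := (Finset.mem_filter.1 (hsub (Finset.mem_filter.2
      ⟨Finset.mem_range.2 hv, Relation.ReflTransGen.refl⟩))).2
    exact hac v (Relation.TransGen.head' h this)

lemma exists_chain_agreeing {S : Finset Rule} (hG : G.IsDG S true) {f : ℕ → Option ℕ}
    (hf : ∀ a ∈ attrs S, f a ∈ allowed S true a) :
    ∀ v < G.n, ∃ p u, G.chainFrom v p u ∧ G.IsTerminal u ∧ u < G.n ∧
      ∀ q ∈ G.pathEqs p, q.2 = f q.1 := by
  intro v hv
  induction hk : (reach G v).card using Nat.strong_induction_on generalizing v with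
  | _ k ih =>
    have hnode := hG.2.2.2 v hv
    by_cases hterm : G.IsTerminal v
    · exact ⟨[], v, rfl, hterm, hv, by simp [pathEqs_nil]⟩
    rw [if_neg hterm] at hnode
    obtain ⟨a, hlab, ha, hout, -⟩ := hnode
    obtain ⟨w, hw⟩ := (hout (f a)).2 (hf a ha)
    obtain ⟨p, u, hch, hu, hun, hpf⟩ := ih _ (hk ▸ card_reach_lt hG.2.2.1 hv ⟨f a, hw⟩) w
      (hG.2.1 _ hw).2 rfl
    refine ⟨(v, f a) :: p, u, ⟨rfl, w, hw, hch⟩, hu, hun, fun q hq => ?_⟩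
    rw [pathEqs_cons_of_label_eq hlab] at hq
    rcases Finset.mem_insert.1 hq with rfl | hq
    · rfl
    · exact hpf q hq

end DGraph

lemma exists_mem_R_AD_subset {S : Finset Rule} {r : Rule} (hr : r ∈ S) :
    ∃ r' ∈ R_AD S, r'.K ⊆ r.K ∧ r'.rhs = r.rhs := by
  obtain ⟨r', hr', hmin⟩ := (S.filter fun r' => r'.K ⊆ r.K ∧ r'.rhs = r.rhs).exists_min_image
    (fun r' => r'.K.card) ⟨r, Finset.mem_filter.2 ⟨hr, subset_rfl, rfl⟩⟩
  obtain ⟨hr'S, hK, hrhs⟩ := Finset.mem_filter.1 hr'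
  refine ⟨r', Finset.mem_filter.2 ⟨hr'S, ?_⟩, hK, hrhs⟩
  rintro ⟨r'', hr''S, hss, hrhs''⟩
  have := hmin r'' (Finset.mem_filter.2 ⟨hr''S, hss.subset.trans hK, hrhs''.trans hrhs⟩)
  exact absurd (Finset.card_lt_card hss) (not_lt.2 this)

lemma R_AD_subset (S : Finset Rule) : R_AD S ⊆ S :=
  Finset.filter_subset _ _

/-- `P` is the equation system of the complete path on which every query is answered by `f`. -/
lemma TreeSolvesEAD.exists_pathEqs_agreeing {S : Finset Rule} {G : DGraph}
    (hG : TreeSolvesEAD S G) {f : ℕ → Option ℕ} (hf : ∀ a ∈ attrs S, f a ∈ allowed S true a) :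
    ∃ P : Finset (ℕ × Option ℕ), P.card ≤ G.depth ∧ (∀ q ∈ P, q.2 = f q.1) ∧
      ∀ r ∈ S, ConsistentE (liftK r.K ∪ P) → ∃ r' ∈ R_AD S, r'.rhs = r.rhs ∧ liftK r'.K ⊆ P := by
  obtain ⟨hDG, -, hsolves⟩ := hG
  obtain ⟨p, u, hch, hu, hun, hpf⟩ := DGraph.exists_chain_agreeing hDG hf G.root hDG.1
  have hp : G.IsCompletePath p u := ⟨hch, hu, hun⟩
  refine ⟨G.pathEqs p, (DGraph.card_pathEqs_le p).trans (hp.length_le_depth hDG), hpf, ?_⟩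
  intro r hr hrc
  obtain ⟨hsub, hcompl⟩ := hsolves p u hp (consistentE_of_forall_eq hpf)
  obtain ⟨r'', hr''u, hrhs, hr''P⟩ :
      ∃ r'' ∈ G.termSet u, r''.rhs = r.rhs ∧ liftK r''.K ⊆ G.pathEqs p := by
    by_cases hru : r ∈ G.termSet u
    · exact ⟨r, hru, rfl, hsub r hru⟩
    by_cases hrhs : r.rhs ∈ (G.termSet u).image Rule.rhs
    · obtain ⟨r'', hr'', hrhs⟩ := Finset.mem_image.1 hrhs
      exact ⟨r'', hr'', hrhs, hsub r'' hr''⟩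
    · exact absurd hrc (hcompl r hr hru hrhs)
  obtain ⟨r', hr', hK, hrhs'⟩ :=
    exists_mem_R_AD_subset (DGraph.termSet_subset hDG hu hun hr''u)
  exact ⟨r', hr', hrhs'.trans hrhs, (liftK_subset_liftK.2 hK).trans hr''P⟩

lemma dPar_R_AD_le_depth {S : Finset Rule} (hwf : ∀ r ∈ S, r.WF) {G : DGraph}
    (hG : TreeSolvesEAD S G) : dPar (R_AD S) ≤ G.depth := by
  rcases (R_AD S).eq_empty_or_nonempty with hempty | hne
  · simp [dPar, hempty]
  obtain ⟨r, hr, hlen⟩ := Finset.exists_mem_eq_sup _ hne Rule.len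
  have hrS := R_AD_subset S hr
  have hE := (hwf r hrS).consistentE_liftK
  obtain ⟨P, hcard, hPf, hcover⟩ := hG.exists_pathEqs_agreeing (f := assignOf (liftK r.K))
    (fun a _ => assignOf_mem_allowed (fun q hq => by
      obtain ⟨δ, hδ, hq2⟩ := mem_liftK.1 hq
      exact hq2 ▸ some_mem_allowed (mem_VS hrS hδ) true) a)
  have hrP : ConsistentE (liftK r.K ∪ P) := by
    refine consistentE_of_forall_eq (f := assignOf (liftK r.K)) fun q hq => ?_
    rcases Finset.mem_union.1 hq with hq | hq
    · exact (assignOf_eq hE hq).symm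
    · exact hPf q hq
  obtain ⟨r', hr', hrhs, hr'P⟩ := hcover r hrS hrP
  have hK : r'.K ⊆ r.K := liftK_subset_liftK.1 (liftK_subset_of_agree hPf hr'P)
  have hKeq : r'.K = r.K := by
    by_contra hne
    exact (Finset.mem_filter.1 hr).2 ⟨r', R_AD_subset S hr', hK.ssubset_of_ne hne, hrhs⟩
  calc dPar (R_AD S) = (liftK r'.K).card := by rw [card_liftK, hKeq, dPar, hlen, Rule.len]
    _ ≤ P.card := Finset.card_le_card hr'P
    _ ≤ G.depth := hcard

section Restriction

def residual (S' : Finset Rule) (α : Finset (ℕ × Option ℕ)) : Finset Rule :=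
  I_AD (restrict S' α)

variable {S' : Finset Rule} {α : Finset (ℕ × Option ℕ)}

lemma mem_restrict {s : Rule} :
    s ∈ restrict S' α ↔ ∃ r ∈ S', ConsistentE (liftK r.K ∪ α) ∧ r.restrict α = s := by
  simp [restrict, and_assoc]

lemma Rule.mem_attrs_restrict {r : Rule} {x : ℕ} :
    x ∈ (r.restrict α).attrs ↔ ∃ δ, (x, δ) ∈ r.K ∧ (x, some δ) ∉ α := by
  simp [Rule.attrs, Rule.restrict]

lemma Rule.len_restrict_eq_zero_iff {r : Rule} : (r.restrict α).len = 0 ↔ liftK r.K ⊆ α := by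
  simp only [Rule.len, Rule.restrict, Finset.card_eq_zero, Finset.filter_eq_empty_iff, not_not]
  refine ⟨fun h q hq => ?_, fun h p hp => h (Finset.mem_image_of_mem _ hp)⟩
  obtain ⟨δ, hδ, hq2⟩ := mem_liftK.1 hq
  rw [← Prod.eta q, hq2]
  exact h hδ

lemma Rule.len_restrict_anti {r : Rule} {α' : Finset (ℕ × Option ℕ)} (h : α ⊆ α') :
    (r.restrict α').len ≤ (r.restrict α).len :=
  Finset.card_le_card (Finset.monotone_filter_right _ fun _ _ hp hmem => hp (h hmem))

lemma rhs_mem_D0_restrict {r : Rule} (hr : r ∈ S') (hα : ConsistentE α) (h : liftK r.K ⊆ α) :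
    r.rhs ∈ D0 (restrict S' α) := by
  refine Finset.mem_image.2 ⟨r.restrict α, Finset.mem_filter.2 ⟨?_, ?_⟩, rfl⟩
  · exact mem_restrict.2 ⟨r, hr, by rwa [Finset.union_eq_right.2 h], rfl⟩
  · exact Rule.len_restrict_eq_zero_iff.2 h

lemma mem_I_AD {T : Finset Rule} {s : Rule} :
    s ∈ I_AD T ↔ s ∈ T ∧ (s.len = 0 ∨ s.rhs ∉ D0 T) :=
  Finset.mem_filter

lemma exists_subset_of_mem_D0_restrict {d : ℕ} (h : d ∈ D0 (restrict S' α)) :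
    ∃ r ∈ S', r.rhs = d ∧ liftK r.K ⊆ α := by
  obtain ⟨s, hs, rfl⟩ := Finset.mem_image.1 h
  obtain ⟨hs, hlen⟩ := Finset.mem_filter.1 hs
  obtain ⟨r, hr, -, rfl⟩ := mem_restrict.1 hs
  exact ⟨r, hr, rfl, Rule.len_restrict_eq_zero_iff.1 hlen⟩

lemma attrs_restrict_subset : attrs (restrict S' α) ⊆ attrs S' := by
  intro x hx
  obtain ⟨s, hs, hxs⟩ := Finset.mem_biUnion.1 hx
  obtain ⟨r, hr, -, rfl⟩ := mem_restrict.1 hs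
  obtain ⟨δ, hδ, -⟩ := Rule.mem_attrs_restrict.1 hxs
  exact Finset.mem_biUnion.2 ⟨r, hr, Finset.mem_image.2 ⟨_, hδ, rfl⟩⟩

lemma attrs_residual_subset : attrs (residual S' α) ⊆ attrs (restrict S' α) :=
  attrs_mono (Finset.filter_subset _ _)

lemma empty_mem_ESys (S : Finset Rule) (ext : Bool) : ∅ ∈ ESys S ext :=
  ⟨consistentE_empty, by simp⟩

end Restriction

lemma beta_residual_le_depth {S : Finset Rule} (hwf : ∀ r ∈ S, r.WF) {G : DGraph}
    (hG : TreeSolvesEAD S G) {α : Finset (ℕ × Option ℕ)} (hα : α ∈ ESys (R_AD S) true) :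
    beta (residual (R_AD S) α) ≤ G.depth := by
  set T := residual (R_AD S) α
  obtain ⟨P, hcard, hPf, hcover⟩ := hG.exists_pathEqs_agreeing (f := assignOf α)
    (fun a _ => allowed_mono (R_AD_subset S) a (assignOf_mem_allowed (fun p hp => (hα.2 p hp).2) a))
  suffices hB : IsNodeCover T (P.image Prod.fst ∩ attrs T) from
    calc beta T ≤ (P.image Prod.fst ∩ attrs T).card := Nat.sInf_le ⟨_, hB, rfl⟩
      _ ≤ P.card := (Finset.card_le_card Finset.inter_subset_left).trans Finset.card_image_le
      _ ≤ G.depth := hcard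
  refine ⟨Finset.inter_subset_right, fun s hsT hsne => ?_⟩
  by_contra hdisj
  obtain ⟨hsα, hs⟩ := mem_I_AD.1 hsT
  obtain ⟨r, hr, -, rfl⟩ := mem_restrict.1 hsα
  have hrP : ConsistentE (liftK r.K ∪ P) := by
    refine (hwf r (R_AD_subset S hr)).consistentE_liftK.union (consistentE_of_forall_eq hPf) ?_
    intro q hq q' hq' hqq'
    obtain ⟨δ, hδ, hq2⟩ := mem_liftK.1 hq
    by_cases hqα : (q.1, some δ) ∈ α
    · rw [hPf q' hq', ← hqq', assignOf_eq hα.1 hqα, hq2]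
    · refine absurd ⟨q.1, Finset.mem_inter.2 ⟨Rule.mem_attrs_restrict.2 ⟨δ, hδ, hqα⟩, ?_⟩⟩ hdisj
      exact Finset.mem_inter.2 ⟨Finset.mem_image.2 ⟨q', hq', hqq'.symm⟩,
        Finset.mem_biUnion.2 ⟨_, hsT, Rule.mem_attrs_restrict.2 ⟨δ, hδ, hqα⟩⟩⟩
  obtain ⟨r', hr', hrhs, hr'P⟩ := hcover r (R_AD_subset S hr) hrP
  have hD0 := rhs_mem_D0_restrict hr' hα.1 (liftK_subset_of_agree hPf hr'P)
  have hlen : (r.restrict α).len ≠ 0 := by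
    obtain ⟨x, hx⟩ := hsne
    exact Finset.card_ne_zero.2 ⟨_, (Finset.mem_image.1 hx).choose_spec.1⟩
  exact hs.elim hlen fun h => h (hrhs ▸ hD0)

lemma beta_EAD_R_AD_le_depth {S : Finset Rule} (hwf : ∀ r ∈ S, r.WF) {G : DGraph}
    (hG : TreeSolvesEAD S G) : beta_EAD (R_AD S) ≤ G.depth :=
  csSup_le ⟨_, ∅, empty_mem_ESys _ _, rfl⟩ fun _ ⟨_, hα, hb⟩ =>
    hb ▸ beta_residual_le_depth hwf hG hα

def IsADAnswer (S Z : Finset Rule) (F : Finset (ℕ × Option ℕ)) : Prop :=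
  (∀ r ∈ Z, liftK r.K ⊆ F) ∧
    ∀ r ∈ S, r ∉ Z → r.rhs ∉ Z.image Rule.rhs → ¬ ConsistentE (liftK r.K ∪ F)

/-- A working node carries its attribute, the list of labels of its outgoing edges and the
subtree below each label. -/
inductive LTree where
  | leaf (Z : Finset Rule)
  | node (a : ℕ) (ls : List (Option ℕ)) (kid : Option ℕ → LTree)

namespace LTree

def size : LTree → ℕ
  | leaf _ => 1
  | node _ ls kid => 1 + (ls.map fun l => (kid l).size).sum

def height : LTree → ℕ
  | leaf _ => 0
  | node _ ls kid => 1 + ls.toFinset.sup fun l => (kid l).height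

def labels : LTree → List (ℕ ⊕ Finset Rule)
  | leaf Z => [Sum.inr Z]
  | node a ls kid => Sum.inl a :: (ls.map fun l => (kid l).labels).flatten

/-- The edges from `par` to the roots of the trees `l ∈ ls`, together with the edges `f l o`
inside them, when the trees are numbered consecutively from `w` and tree `l` has `sz l` nodes.
Passing `edges` itself as `f` keeps the recursion of `edges` structural. -/
def edgesFrom (par : ℕ) (f : Option ℕ → ℕ → List (ℕ × Option ℕ × ℕ)) (sz : Option ℕ → ℕ) :
    List (Option ℕ) → ℕ → List (ℕ × Option ℕ × ℕ)
  | [], _ => []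
  | l :: ls, w => (par, l, w) :: (f l w ++ edgesFrom par f sz ls (w + sz l))

/-- The edges of `t` when its nodes are numbered in preorder from `v`. -/
def edges : LTree → ℕ → List (ℕ × Option ℕ × ℕ)
  | leaf _, _ => []
  | node _ ls kid, v => edgesFrom v (fun l => (kid l).edges) (fun l => (kid l).size) ls (v + 1)

def forestSize (kid : Option ℕ → LTree) (ls : List (Option ℕ)) : ℕ :=
  (ls.map fun l => (kid l).size).sum

def forestLabels (kid : Option ℕ → LTree) (ls : List (Option ℕ)) : List (ℕ ⊕ Finset Rule) :=
  (ls.map fun l => (kid l).labels).flatten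

def forestEdges (par : ℕ) (kid : Option ℕ → LTree) (ls : List (Option ℕ)) (w : ℕ) :
    List (ℕ × Option ℕ × ℕ) :=
  edgesFrom par (fun l => (kid l).edges) (fun l => (kid l).size) ls w

variable {a par w : ℕ} {l : Option ℕ} {ls : List (Option ℕ)} {kid : Option ℕ → LTree}

lemma size_node : (node a ls kid).size = 1 + forestSize kid ls := rfl

lemma labels_node : (node a ls kid).labels = Sum.inl a :: forestLabels kid ls := rfl

lemma edges_node {v : ℕ} : (node a ls kid).edges v = forestEdges v kid ls (v + 1) := rfl

lemma forestSize_cons : forestSize kid (l :: ls) = (kid l).size + forestSize kid ls :=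
  List.sum_cons

lemma forestLabels_cons : forestLabels kid (l :: ls) = (kid l).labels ++ forestLabels kid ls :=
  List.flatten_cons

lemma forestEdges_cons : forestEdges par kid (l :: ls) w =
    (par, l, w) :: ((kid l).edges w ++ forestEdges par kid ls (w + (kid l).size)) := rfl

lemma mem_forestEdges_cons {e : ℕ × Option ℕ × ℕ} : e ∈ forestEdges par kid (l :: ls) w ↔
    e = (par, l, w) ∨ e ∈ (kid l).edges w ∨ e ∈ forestEdges par kid ls (w + (kid l).size) := by
  rw [forestEdges_cons, List.mem_cons, List.mem_append]

lemma size_pos : ∀ t : LTree, 0 < t.size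
  | leaf _ => Nat.one_pos
  | node _ _ _ => by simp [size]

lemma length_labels (t : LTree) : t.labels.length = t.size := by
  induction t with
  | leaf _ => rfl
  | node a ls kid ih =>
    simp only [labels, size, List.length_cons, List.length_flatten, List.map_map,
      Function.comp_def, ih]
    omega

lemma forestEdges_bounds_of_kid (hkid : ∀ l ∈ ls, ∀ o, ∀ e ∈ (kid l).edges o,
      o ≤ e.1 ∧ e.1 < e.2.2 ∧ e.2.2 < o + (kid l).size) (hpar : par < w) :
    ∀ e ∈ forestEdges par kid ls w,
      (e.1 = par ∨ w ≤ e.1) ∧ e.1 < e.2.2 ∧ w ≤ e.2.2 ∧ e.2.2 < w + forestSize kid ls := by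
  induction ls generalizing w with
  | nil => exact fun e he => absurd he List.not_mem_nil
  | cons l ls ih =>
    intro e he
    have := size_pos (kid l)
    rw [forestSize_cons]
    rcases mem_forestEdges_cons.1 he with rfl | he | he
    · exact ⟨Or.inl rfl, hpar, le_rfl, show w < w + ((kid l).size + forestSize kid ls) by omega⟩
    · have := hkid l List.mem_cons_self w e he
      omega
    · have := ih (fun l hl => hkid l (List.mem_cons_of_mem _ hl)) (by omega) e he
      omega

lemma edges_bounds (t : LTree) (v : ℕ) :
    ∀ e ∈ t.edges v, v ≤ e.1 ∧ e.1 < e.2.2 ∧ e.2.2 < v + t.size := by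
  induction t generalizing v with
  | leaf _ => exact fun e he => absurd he List.not_mem_nil
  | node a ls kid ih =>
    intro e he
    have := forestEdges_bounds_of_kid (fun l _ => ih l) (Nat.lt_succ_self v) e he
    rw [size_node]
    omega

lemma forestEdges_targets_perm (hkid : ∀ l ∈ ls, ∀ o,
      ((kid l).edges o |>.map fun e => e.2.2).Perm (List.range' (o + 1) ((kid l).size - 1))) :
    ((forestEdges par kid ls w).map fun e => e.2.2).Perm (List.range' w (forestSize kid ls)) := by
  induction ls generalizing w with
  | nil => simp [forestEdges, edgesFrom, forestSize]
  | cons l ls ih =>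
    have := size_pos (kid l)
    set n := (kid l).size
    have hsplit : List.range' w (n + forestSize kid ls) =
        w :: (List.range' (w + 1) (n - 1) ++ List.range' (w + n) (forestSize kid ls)) := by
      rw [show n + forestSize kid ls = (n - 1 + forestSize kid ls) + 1 by omega, List.range'_succ,
        show w + n = (w + 1) + (n - 1) by omega, List.range'_append_1]
    rw [forestEdges_cons, forestSize_cons, hsplit, List.map_cons, List.map_append]
    exact ((hkid l List.mem_cons_self w).append
      (ih fun l hl => hkid l (List.mem_cons_of_mem _ hl))).cons w

lemma targets_perm (t : LTree) (v : ℕ) :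
    ((t.edges v).map fun e => e.2.2).Perm (List.range' (v + 1) (t.size - 1)) := by
  induction t generalizing v with
  | leaf _ => simp [edges, size]
  | node a ls kid ih =>
    simpa [edges_node, size_node] using forestEdges_targets_perm (par := v) (w := v + 1)
      (fun l _ => ih l)

lemma height_kid_le (hl : l ∈ ls) : (kid l).height ≤ ls.toFinset.sup fun l => (kid l).height :=
  Finset.le_sup (f := fun l => (kid l).height) (List.mem_toFinset.2 hl)

/-- In the numbering of the forest of the `kid l` (`l ∈ ls`) below the node `par` that starts
at `w`, the child `kid l` occupies the indices `[o, o + (kid l).size)`. -/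
structure IsChildBlock (par : ℕ) (kid : Option ℕ → LTree) (ls : List (Option ℕ)) (w : ℕ)
    (l : Option ℕ) (o : ℕ) : Prop where
  mem : l ∈ ls
  le : w ≤ o
  le_end : o + (kid l).size ≤ w + forestSize kid ls
  edge_mem : (par, l, o) ∈ forestEdges par kid ls w
  edges_subset : ∀ e ∈ (kid l).edges o, e ∈ forestEdges par kid ls w
  mem_edges : ∀ e ∈ forestEdges par kid ls w, o ≤ e.1 → e.1 < o + (kid l).size →
    e ∈ (kid l).edges o
  getD_labels : ∀ u, o ≤ u → u < o + (kid l).size →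
    (forestLabels kid ls).getD (u - w) (.inr ∅) = (kid l).labels.getD (u - o) (.inr ∅)

lemma forestEdges_bounds (hpar : par < w) {e : ℕ × Option ℕ × ℕ}
    (he : e ∈ forestEdges par kid ls w) :
    (e.1 = par ∨ w ≤ e.1) ∧ e.1 < e.2.2 ∧ w ≤ e.2.2 ∧ e.2.2 < w + forestSize kid ls :=
  forestEdges_bounds_of_kid (fun l _ => edges_bounds (kid l)) hpar e he

lemma isChildBlock_head (hpar : par < w) : IsChildBlock par kid (l :: ls) w l w where
  mem := List.mem_cons_self
  le := le_rfl
  le_end := by rw [forestSize_cons]; omega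
  edge_mem := List.mem_cons_self
  edges_subset _ he := mem_forestEdges_cons.2 (Or.inr (Or.inl he))
  mem_edges e he h1 h2 := by
    rcases mem_forestEdges_cons.1 he with rfl | he | he
    · exact absurd h1 (not_le.2 hpar)
    · exact he
    · have := forestEdges_bounds (Nat.lt_of_lt_of_le hpar (Nat.le_add_right w _)) he
      omega
  getD_labels u h1 h2 := by
    rw [forestLabels_cons]
    exact List.getD_append _ _ _ _ (by rw [length_labels]; omega)

lemma IsChildBlock.cons {o : ℕ} {l₀ : Option ℕ} (hpar : par < w)
    (h : IsChildBlock par kid ls (w + (kid l₀).size) l o) :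
    IsChildBlock par kid (l₀ :: ls) w l o where
  mem := List.mem_cons_of_mem _ h.mem
  le := (Nat.le_add_right _ _).trans h.le
  le_end := by have := h.le_end; rw [forestSize_cons]; omega
  edge_mem := mem_forestEdges_cons.2 (Or.inr (Or.inr h.edge_mem))
  edges_subset e he := mem_forestEdges_cons.2 (Or.inr (Or.inr (h.edges_subset e he)))
  mem_edges e he h1 h2 := by
    have := h.le
    rcases mem_forestEdges_cons.1 he with rfl | he | he
    · exact absurd h1 (by simp only; omega)
    · have := edges_bounds (kid l₀) w e he
      omega
    · exact h.mem_edges e he h1 h2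
  getD_labels u h1 h2 := by
    have := h.le
    rw [forestLabels_cons, List.getD_append_right _ _ _ _ (by rw [length_labels]; omega),
      length_labels, Nat.sub_sub, h.getD_labels u h1 h2]

lemma exists_isChildBlock_of_mem_range (hpar : par < w) {u : ℕ} (hwu : w ≤ u)
    (hu : u < w + forestSize kid ls) : ∃ l o, IsChildBlock par kid ls w l o ∧ o ≤ u ∧
      u < o + (kid l).size := by
  induction ls generalizing w with
  | nil => simp [forestSize] at hu; omega
  | cons l₀ ls ih =>
    by_cases hul : u < w + (kid l₀).size
    · exact ⟨l₀, w, isChildBlock_head hpar, hwu, hul⟩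
    · rw [forestSize_cons] at hu
      obtain ⟨l, o, hb, hou⟩ := ih (w := w + (kid l₀).size) (by omega) (by omega) (by omega)
      exact ⟨l, o, hb.cons hpar, hou⟩

lemma exists_isChildBlock_of_edge (hpar : par < w) {o : ℕ}
    (he : (par, l, o) ∈ forestEdges par kid ls w) : IsChildBlock par kid ls w l o := by
  induction ls generalizing w with
  | nil => exact absurd he List.not_mem_nil
  | cons l₀ ls ih =>
    rcases mem_forestEdges_cons.1 he with heq | he | he
    · obtain ⟨rfl, rfl⟩ := Prod.mk.inj (Prod.mk.inj heq).2
      exact isChildBlock_head hpar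
    · have := edges_bounds (kid l₀) w _ he
      simp only at this
      omega
    · exact (ih (w := w + (kid l₀).size) (by omega) he).cons hpar

lemma exists_edge_of_mem (hl : l ∈ ls) : ∃ o, (par, l, o) ∈ forestEdges par kid ls w := by
  induction ls generalizing w with
  | nil => exact absurd hl List.not_mem_nil
  | cons l₀ ls ih =>
    rcases List.mem_cons.1 hl with rfl | hl
    · exact ⟨w, List.mem_cons_self⟩
    · obtain ⟨o, ho⟩ := ih (w := w + (kid l₀).size) hl
      exact ⟨o, mem_forestEdges_cons.2 (Or.inr (Or.inr ho))⟩

lemma edge_target_unique (hpar : par < w) (hnd : ls.Nodup) {o o' : ℕ}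
    (h : (par, l, o) ∈ forestEdges par kid ls w) (h' : (par, l, o') ∈ forestEdges par kid ls w) :
    o = o' := by
  induction ls generalizing w with
  | nil => exact absurd h List.not_mem_nil
  | cons l₀ ls ih =>
    obtain ⟨hl₀, hnd⟩ := List.nodup_cons.1 hnd
    have hpar' : par < w + (kid l₀).size := by omega
    have hrest : ∀ {x}, (par, l, x) ∈ forestEdges par kid ls (w + (kid l₀).size) → l ≠ l₀ :=
      fun hx hll => hl₀ (hll ▸ (exists_isChildBlock_of_edge hpar' hx).mem)
    have hinner : ∀ {x}, (par, l, x) ∉ (kid l₀).edges w := fun hx => by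
      have := edges_bounds (kid l₀) w _ hx
      simp only at this
      omega
    simp only [mem_forestEdges_cons, Prod.mk.injEq, true_and] at h h'
    rcases h with ⟨rfl, rfl⟩ | h | h <;> rcases h' with ⟨h'l, rfl⟩ | h' | h'
    all_goals first
      | rfl
      | exact absurd h hinner | exact absurd h' hinner
      | exact absurd rfl (hrest h') | exact absurd h'l (hrest h)
      | exact ih hpar' hnd h h'

/-- `t` is an e-tree over `S` answering AD(S) correctly on every path, once the equations `E`
observed before reaching `t` are added to the equations of the path. -/
inductive SolvesEADAfter (S : Finset Rule) : LTree → Finset (ℕ × Option ℕ) → Prop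
  | leaf {Z : Finset Rule} {E : Finset (ℕ × Option ℕ)} :
      Z ⊆ S → IsADAnswer S Z E → SolvesEADAfter S (leaf Z) E
  | node {a : ℕ} {ls : List (Option ℕ)} {kid : Option ℕ → LTree} {E : Finset (ℕ × Option ℕ)} :
      a ∈ attrs S → ls = (allowed S true a).toList →
      (∀ l ∈ ls, SolvesEADAfter S (kid l) (insert (a, l) E)) → SolvesEADAfter S (node a ls kid) E

/-- `t`, numbered in preorder from `v`, is the part of `G` on the nodes `[v, v + t.size)`. -/
structure IsSubtreeAt (t : LTree) (G : DGraph) (v : ℕ) : Prop where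
  edges_subset : ∀ e ∈ t.edges v, e ∈ G.edges
  mem_edges : ∀ e ∈ G.edges, v ≤ e.1 → e.1 < v + t.size → e ∈ t.edges v
  label_eq : ∀ u, v ≤ u → u < v + t.size → G.label u = t.labels.getD (u - v) (.inr ∅)

variable {G : DGraph} {v : ℕ}

lemma IsSubtreeAt.child {o : ℕ} (h : (node a ls kid).IsSubtreeAt G v)
    (hb : IsChildBlock v kid ls (v + 1) l o) : (kid l).IsSubtreeAt G o where
  edges_subset e he := h.edges_subset e (hb.edges_subset e he)
  mem_edges e he h1 h2 := by
    have := hb.le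
    have := hb.le_end
    exact hb.mem_edges e (h.mem_edges e he (by omega) (by rw [size_node]; omega)) h1 h2
  label_eq u h1 h2 := by
    have := hb.le
    have := hb.le_end
    rw [h.label_eq u (by omega) (by rw [size_node]; omega), labels_node,
      show u - v = u - (v + 1) + 1 by omega, List.getD_cons_succ, hb.getD_labels u h1 h2]

lemma IsSubtreeAt.mem_edges_root_iff (h : (node a ls kid).IsSubtreeAt G v) {w : ℕ} :
    (v, l, w) ∈ G.edges ↔ (v, l, w) ∈ forestEdges v kid ls (v + 1) :=
  ⟨fun he => h.mem_edges _ he le_rfl (by rw [size_node]; omega), h.edges_subset _⟩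

lemma IsSubtreeAt.label_root {t : LTree} (h : t.IsSubtreeAt G v) :
    G.label v = t.labels.getD 0 (.inr ∅) := by
  simpa using h.label_eq v le_rfl (Nat.lt_add_of_pos_right t.size_pos)

lemma IsSubtreeAt.isDG_node_root {S : Finset Rule} (h : (node a ls kid).IsSubtreeAt G v)
    (ha : a ∈ attrs S) (hls : ls = (allowed S true a).toList) :
    if G.IsTerminal v then ∃ Z : Finset Rule, G.label v = Sum.inr Z ∧ Z ⊆ S
    else ∃ a : ℕ, G.label v = Sum.inl a ∧ a ∈ attrs S ∧
        (∀ l : Option ℕ, (∃ w, (v, l, w) ∈ G.edges) ↔ l ∈ allowed S true a) ∧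
        (∀ l w w', (v, l, w) ∈ G.edges → (v, l, w') ∈ G.edges → w = w') := by
  have hout : ∀ l, (∃ w, (v, l, w) ∈ G.edges) ↔ l ∈ allowed S true a := by
    intro l
    rw [← Finset.mem_toList, ← hls]
    constructor
    · rintro ⟨w, hw⟩
      exact (exists_isChildBlock_of_edge (Nat.lt_succ_self v) (h.mem_edges_root_iff.1 hw)).mem
    · intro hl
      obtain ⟨w, hw⟩ := exists_edge_of_mem hl
      exact ⟨w, h.mem_edges_root_iff.2 hw⟩
  obtain ⟨w, hw⟩ := (hout none).2 (none_mem_allowed S a)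
  rw [if_neg fun hterm => hterm _ hw rfl]
  refine ⟨a, h.label_root, ha, hout, fun l w w' hw hw' => ?_⟩
  exact edge_target_unique (Nat.lt_succ_self v) (hls ▸ Finset.nodup_toList _)
    (h.mem_edges_root_iff.1 hw) (h.mem_edges_root_iff.1 hw')

lemma SolvesEADAfter.isDG_node {S : Finset Rule} {t : LTree} {E : Finset (ℕ × Option ℕ)}
    (hS : t.SolvesEADAfter S E) (h : t.IsSubtreeAt G v) {u : ℕ} (hvu : v ≤ u)
    (hu : u < v + t.size) :
    if G.IsTerminal u then ∃ Z : Finset Rule, G.label u = Sum.inr Z ∧ Z ⊆ S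
    else ∃ a : ℕ, G.label u = Sum.inl a ∧ a ∈ attrs S ∧
        (∀ l : Option ℕ, (∃ w, (u, l, w) ∈ G.edges) ↔ l ∈ allowed S true a) ∧
        (∀ l w w', (u, l, w) ∈ G.edges → (u, l, w') ∈ G.edges → w = w') := by
  induction hS generalizing v u with
  | @leaf Z _ hZ _ =>
    obtain rfl : u = v := by simp only [size] at hu; omega
    have hterm : G.IsTerminal u := fun e he heu =>
      absurd (h.mem_edges e he (heu ▸ le_rfl) (by simp [heu, size])) List.not_mem_nil
    rw [if_pos hterm]
    exact ⟨Z, h.label_root, hZ⟩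
  | @node a ls kid _ ha hls _ ih =>
    rcases hvu.eq_or_lt with rfl | hvu
    · exact h.isDG_node_root ha hls
    · rw [size_node] at hu
      obtain ⟨l, o, hb, hou⟩ := exists_isChildBlock_of_mem_range (kid := kid) (ls := ls)
        (Nat.lt_succ_self v) hvu (by omega)
      exact ih l hb.mem (h.child hb) hou.1 hou.2

lemma SolvesEADAfter.chainFrom {S : Finset Rule} {t : LTree} {E : Finset (ℕ × Option ℕ)}
    (hS : t.SolvesEADAfter S E) (h : t.IsSubtreeAt G v) {p : List (ℕ × Option ℕ)} {u : ℕ}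
    (hch : G.chainFrom v p u) (hu : G.IsTerminal u) :
    p.length ≤ t.height ∧ IsADAnswer S (G.termSet u) (E ∪ G.pathEqs p) := by
  induction hS generalizing v p with
  | @leaf Z E _ hans =>
    cases p with
    | nil =>
      obtain rfl : v = u := hch
      have hZ : G.termSet v = Z := by simp [DGraph.termSet, h.label_root, labels]
      simpa [hZ, DGraph.pathEqs_nil, height] using hans
    | cons e rest =>
      obtain ⟨-, w, hw, -⟩ := hch
      exact absurd (h.mem_edges _ hw le_rfl (by simp [size])) List.not_mem_nil
  | @node a ls kid E _ hls _ ih =>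
    cases p with
    | nil =>
      obtain rfl : v = u := hch
      obtain ⟨w, hw⟩ := exists_edge_of_mem (par := v) (kid := kid) (w := v + 1)
        (hls ▸ Finset.mem_toList.2 (none_mem_allowed S a))
      exact absurd rfl (hu _ (h.mem_edges_root_iff.2 hw))
    | cons e rest =>
      obtain ⟨he, w, hw, hrest⟩ := hch
      have hb := exists_isChildBlock_of_edge (Nat.lt_succ_self v) (h.mem_edges_root_iff.1 hw)
      obtain ⟨hlen, hans⟩ := ih e.2 hb.mem (h.child hb) hrest
      have hpath : E ∪ G.pathEqs (e :: rest) = insert (a, e.2) E ∪ G.pathEqs rest := by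
        rw [DGraph.pathEqs_cons_of_label_eq (he ▸ h.label_root), Finset.union_insert,
          Finset.insert_union]
      refine ⟨?_, hpath ▸ hans⟩
      have := height_kid_le (kid := kid) hb.mem
      simp only [List.length_cons, height] at hlen ⊢
      omega

def toDGraph (t : LTree) : DGraph :=
  ⟨t.size, 0, fun v => t.labels.getD v (.inr ∅), (t.edges 0).toFinset⟩

lemma mem_edges_toDGraph {t : LTree} {e : ℕ × Option ℕ × ℕ} :
    e ∈ t.toDGraph.edges ↔ e ∈ t.edges 0 :=
  List.mem_toFinset

lemma isSubtreeAt_toDGraph (t : LTree) : t.IsSubtreeAt t.toDGraph 0 where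
  edges_subset _ he := mem_edges_toDGraph.2 he
  mem_edges _ he _ _ := mem_edges_toDGraph.1 he
  label_eq _ _ _ := rfl

lemma acyclic_toDGraph (t : LTree) : t.toDGraph.Acyclic := by
  have hlt : ∀ x y, Relation.TransGen t.toDGraph.step x y → x < y := by
    intro x y hxy
    induction hxy with
    | single hs => exact (edges_bounds t 0 _ (mem_edges_toDGraph.1 hs.choose_spec)).2.1
    | tail _ hs ih => exact ih.trans (edges_bounds t 0 _ (mem_edges_toDGraph.1 hs.choose_spec)).2.1
  exact fun v hv => lt_irrefl v (hlt v v hv)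

lemma SolvesEADAfter.isDG_toDGraph {S : Finset Rule} {t : LTree} {E : Finset (ℕ × Option ℕ)}
    (hS : t.SolvesEADAfter S E) : t.toDGraph.IsDG S true := by
  refine ⟨t.size_pos, fun e he => ?_, acyclic_toDGraph t, fun u hu =>
    hS.isDG_node (isSubtreeAt_toDGraph t) (Nat.zero_le u) ((zero_add t.size).symm ▸ hu)⟩
  have := edges_bounds t 0 e (mem_edges_toDGraph.1 he)
  exact ⟨show e.1 < t.size by omega, show e.2.2 < t.size by omega⟩

lemma isTree_toDGraph (t : LTree) : t.toDGraph.IsTree := by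
  have hperm := targets_perm t 0
  refine ⟨fun e he => ?_, fun v hv hv0 => ?_⟩
  · have := edges_bounds t 0 e (mem_edges_toDGraph.1 he)
    show e.2.2 ≠ 0
    omega
  · change v < t.size at hv
    change v ≠ 0 at hv0
    have hmem : v ∈ List.range' (0 + 1) (t.size - 1) := List.mem_range'_1.2 ⟨by omega, by omega⟩
    obtain ⟨e, he, rfl⟩ := List.mem_map.1 (hperm.mem_iff.2 hmem)
    refine ⟨e, ⟨mem_edges_toDGraph.2 he, rfl⟩, fun e' ⟨he', hee'⟩ => ?_⟩
    exact List.inj_on_of_nodup_map (hperm.nodup_iff.2 List.nodup_range')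
      (mem_edges_toDGraph.1 he') he hee'

lemma SolvesEADAfter.treeSolvesEAD_toDGraph {S : Finset Rule} {t : LTree}
    (hS : t.SolvesEADAfter S ∅) : TreeSolvesEAD S t.toDGraph := by
  refine ⟨hS.isDG_toDGraph, isTree_toDGraph t, fun p u hp _ => ?_⟩
  have hans := (hS.chainFrom (isSubtreeAt_toDGraph t) hp.1 hp.2.1).2
  rwa [Finset.empty_union] at hans

lemma SolvesEADAfter.depth_toDGraph_le {S : Finset Rule} {t : LTree}
    {E : Finset (ℕ × Option ℕ)} (hS : t.SolvesEADAfter S E) : t.toDGraph.depth ≤ t.height :=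
  csSup_le' fun _ ⟨_, _, hp, hlen⟩ =>
    hlen ▸ (hS.chainFrom (isSubtreeAt_toDGraph t) hp.1 hp.2.1).1

end LTree

section Phases

variable {S' : Finset Rule} {α α' : Finset (ℕ × Option ℕ)}

lemma Rule.len_restrict_lt {r : Rule} (hsub : α ⊆ α') (hc : ConsistentE (liftK r.K ∪ α'))
    {x : ℕ} (hx : x ∈ (r.restrict α).attrs) (hxα' : ∃ v, (x, v) ∈ α') :
    (r.restrict α').len < (r.restrict α).len := by
  obtain ⟨δ, hδ, hδα⟩ := Rule.mem_attrs_restrict.1 hx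
  obtain ⟨v, hv⟩ := hxα'
  have hval : some δ = v := hc _ (Finset.mem_union_left _ (Finset.mem_image_of_mem _ hδ)) _
    (Finset.mem_union_right _ hv) rfl
  refine Finset.card_lt_card ⟨Finset.monotone_filter_right _ fun _ _ hp hmem => hp (hsub hmem),
    fun hss => ?_⟩
  exact (Finset.mem_filter.1 (hss (Finset.mem_filter.2 ⟨hδ, hδα⟩))).2 (hval ▸ hv)

lemma dPar_residual_lt (hsub : α ⊆ α') (hα' : ConsistentE α') {B : Finset ℕ}
    (hB : IsNodeCover (Splus (residual S' α)) B) (hBα' : ∀ a ∈ B, ∃ v, (a, v) ∈ α')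
    (hd : 0 < dPar (residual S' α)) : dPar (residual S' α') < dPar (residual S' α) := by
  refine (Finset.sup_lt_iff (a := dPar (residual S' α)) hd).2 fun s hs => ?_
  obtain ⟨hsα', hs'⟩ := mem_I_AD.1 hs
  obtain ⟨r, hr, hrc', rfl⟩ := mem_restrict.1 hsα'
  have hrc : ConsistentE (liftK r.K ∪ α) := hrc'.subset (Finset.union_subset_union subset_rfl hsub)
  have hrα : r.restrict α ∈ restrict S' α := mem_restrict.2 ⟨r, hr, hrc, rfl⟩
  by_cases hres : r.restrict α ∈ residual S' α
  · have hle : (r.restrict α).len ≤ dPar (residual S' α) := Finset.le_sup (f := Rule.len) hres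
    have hmono := Rule.len_restrict_anti (r := r) hsub
    rcases hle.lt_or_eq with hlt | heq
    · exact hmono.trans_lt hlt
    obtain ⟨x, hx⟩ := hB.2 _ (Finset.mem_filter.2 ⟨hres, heq⟩) (by
      rw [Rule.attrs, Finset.image_nonempty, ← Finset.card_pos]
      show 0 < (r.restrict α).len
      omega)
    exact heq ▸ Rule.len_restrict_lt hsub hrc' (Finset.mem_inter.1 hx).1
      (hBα' x (Finset.mem_inter.1 hx).2)
  · have hD0 : r.rhs ∈ D0 (restrict S' α) := by
      by_contra hD0
      exact hres (mem_I_AD.2 ⟨hrα, Or.inr hD0⟩)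
    obtain ⟨r', hr', hrhs, hr'α⟩ := exists_subset_of_mem_D0_restrict hD0
    have hD0' := rhs_mem_D0_restrict hr' hα' (hr'α.trans hsub)
    rcases hs' with hlen | hnot
    · exact hlen ▸ hd
    · exact absurd (hrhs ▸ hD0') hnot

lemma exists_subset_of_dPar_residual_eq_zero (hd : dPar (residual S' α) = 0) {r : Rule}
    (hr : r ∈ S') (hrc : ConsistentE (liftK r.K ∪ α)) :
    ∃ r' ∈ S', r'.rhs = r.rhs ∧ liftK r'.K ⊆ α := by
  by_cases hlen : (r.restrict α).len = 0
  · exact ⟨r, hr, rfl, Rule.len_restrict_eq_zero_iff.1 hlen⟩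
  have hres : r.restrict α ∉ residual S' α := fun hres =>
    hlen (Nat.le_zero.1 (hd ▸ Finset.le_sup (f := Rule.len) hres))
  have hD0 : r.rhs ∈ D0 (restrict S' α) := by
    by_contra hD0
    exact hres (mem_I_AD.2 ⟨mem_restrict.2 ⟨r, hr, hrc, rfl⟩, Or.inr hD0⟩)
  exact exists_subset_of_mem_D0_restrict hD0

end Phases

section Normalization

/-- Answers outside `V_{S'}(a)` are recorded as `*`, so that the observed equations stay in
`E_EAD(S')`. -/
def normv (S' : Finset Rule) (a : ℕ) : Option ℕ → Option ℕ
  | some δ => if δ ∈ VS S' a then some δ else none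
  | none => none

def normImage (S' : Finset Rule) (E : Finset (ℕ × Option ℕ)) : Finset (ℕ × Option ℕ) :=
  E.image fun p => (p.1, normv S' p.1 p.2)

variable {S' : Finset Rule}

lemma normv_mem_allowed (a : ℕ) (l : Option ℕ) : normv S' a l ∈ allowed S' true a := by
  cases l with
  | none => exact none_mem_allowed S' a
  | some δ =>
    simp only [normv]
    split_ifs with h
    · exact some_mem_allowed h true
    · exact none_mem_allowed S' a

lemma eq_of_normv_eq_some {a δ : ℕ} {l : Option ℕ} (h : normv S' a l = some δ) : l = some δ := by
  cases l with
  | none => cases h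
  | some δ' =>
    simp only [normv] at h
    split_ifs at h
    exact h

lemma normImage_insert (a : ℕ) (l : Option ℕ) (E : Finset (ℕ × Option ℕ)) :
    normImage S' (insert (a, l) E) = insert (a, normv S' a l) (normImage S' E) :=
  Finset.image_insert _ _ _

lemma mem_of_mem_normImage {E : Finset (ℕ × Option ℕ)} {a δ : ℕ}
    (h : (a, some δ) ∈ normImage S' E) : (a, some δ) ∈ E := by
  obtain ⟨⟨b, l⟩, hp, heq⟩ := Finset.mem_image.1 h
  obtain ⟨rfl, hl⟩ := Prod.mk.inj heq
  rwa [← eq_of_normv_eq_some hl]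

lemma consistentE_liftK_union_normImage {E : Finset (ℕ × Option ℕ)} {r : Rule} (hr : r ∈ S')
    (hwf : r.WF) (hc : ConsistentE (liftK r.K ∪ E)) :
    ConsistentE (liftK r.K ∪ normImage S' E) := by
  refine hwf.consistentE_liftK.union ?_ ?_
  · rintro _ hp' _ hq' hpq
    obtain ⟨p, hp, rfl⟩ := Finset.mem_image.1 hp'
    obtain ⟨q, hq, rfl⟩ := Finset.mem_image.1 hq'
    have hE : ConsistentE E := hc.subset Finset.subset_union_right
    simp only at hpq ⊢
    rw [hpq, hE p hp q hq hpq]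
  · rintro q hq _ hp' hqp
    obtain ⟨p, hp, rfl⟩ := Finset.mem_image.1 hp'
    obtain ⟨δ, hδ, hq2⟩ := mem_liftK.1 hq
    have hval : q.2 = p.2 := hc q (Finset.mem_union_left _ hq) p (Finset.mem_union_right _ hp) hqp
    simp only at hqp ⊢
    rw [← hval, hq2, ← hqp, normv, if_pos (mem_VS hr hδ)]

end Normalization

section Covers

lemma attrs_isNodeCover (T : Finset Rule) : IsNodeCover T (attrs T) :=
  ⟨subset_rfl, fun r hr ⟨x, hx⟩ => ⟨x, Finset.mem_inter.2 ⟨hx, Finset.mem_biUnion.2 ⟨r, hr, hx⟩⟩⟩⟩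

lemma exists_nodeCover_card_eq_beta (T : Finset Rule) :
    ∃ B, IsNodeCover T B ∧ B.card = beta T :=
  Nat.sInf_mem (s := {c | ∃ B, IsNodeCover T B ∧ B.card = c}) ⟨_, _, attrs_isNodeCover T, rfl⟩

lemma beta_le_card_attrs (T : Finset Rule) : beta T ≤ (attrs T).card :=
  Nat.sInf_le ⟨attrs T, attrs_isNodeCover T, rfl⟩

def minCover (T : Finset Rule) : Finset ℕ :=
  (exists_nodeCover_card_eq_beta T).choose

lemma minCover_spec (T : Finset Rule) : IsNodeCover T (minCover T) ∧ (minCover T).card = beta T :=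
  (exists_nodeCover_card_eq_beta T).choose_spec

variable {S' : Finset Rule} {α : Finset (ℕ × Option ℕ)}

lemma attrs_Splus_residual_subset : attrs (Splus (residual S' α)) ⊆ attrs S' :=
  (attrs_mono (Finset.filter_subset _ _)).trans
    (attrs_residual_subset.trans attrs_restrict_subset)

lemma betaPlus_residual_le (hα : α ∈ ESys S' true) :
    betaPlus (residual S' α) ≤ beta_EADplus S' := by
  refine le_csSup ⟨(attrs S').card, ?_⟩ ⟨α, hα, rfl⟩
  rintro _ ⟨α', -, rfl⟩
  exact (beta_le_card_attrs _).trans (Finset.card_le_card attrs_Splus_residual_subset)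

lemma dPar_residual_le : dPar (residual S' α) ≤ dPar S' := by
  refine Finset.sup_le fun s hs => ?_
  obtain ⟨r, hr, -, rfl⟩ := mem_restrict.1 (Finset.mem_filter.1 hs).1
  exact (Finset.card_filter_le _ _).trans (Finset.le_sup (f := Rule.len) hr)

lemma insert_mem_ESys (hα : α ∈ ESys S' true) {a : ℕ} (ha : a ∈ attrs S')
    (hfree : ¬ ∃ v, (a, v) ∈ α) (l : Option ℕ) : insert (a, normv S' a l) α ∈ ESys S' true := by
  refine ⟨hα.1.insert (fun v hv => hfree ⟨v, hv⟩) _, fun p hp => ?_⟩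
  rcases Finset.mem_insert.1 hp with rfl | hp
  · exact ⟨ha, normv_mem_allowed a l⟩
  · exact hα.2 p hp

end Covers

section Construction

variable {S : Finset Rule}

def answerOf (S : Finset Rule) (α : Finset (ℕ × Option ℕ)) : Finset Rule :=
  S.filter fun r => liftK r.K ⊆ α

lemma isADAnswer_answerOf (hwf : ∀ r ∈ S, r.WF) {α E : Finset (ℕ × Option ℕ)}
    (hαE : α = normImage (R_AD S) E) (hd : dPar (residual (R_AD S) α) = 0) :
    IsADAnswer S (answerOf S α) E := by
  refine ⟨fun r hr q hq => ?_, fun r hr _ hrhs hrc => ?_⟩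
  · obtain ⟨δ, -, hq2⟩ := mem_liftK.1 hq
    have hqα := (Finset.mem_filter.1 hr).2 hq
    rw [← Prod.eta q, hq2, hαE] at hqα
    rw [← Prod.eta q, hq2]
    exact mem_of_mem_normImage hqα
  · obtain ⟨r₁, hr₁, hK, hrhs₁⟩ := exists_mem_R_AD_subset hr
    have hc₁ : ConsistentE (liftK r₁.K ∪ α) := hαE ▸ consistentE_liftK_union_normImage hr₁
      (hwf r₁ (R_AD_subset S hr₁))
      (hrc.subset (Finset.union_subset_union (liftK_subset_liftK.2 hK) subset_rfl))
    obtain ⟨r₂, hr₂, hrhs₂, hr₂α⟩ := exists_subset_of_dPar_residual_eq_zero hd hr₁ hc₁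
    exact hrhs (Finset.mem_image.2
      ⟨r₂, Finset.mem_filter.2 ⟨R_AD_subset S hr₂, hr₂α⟩, hrhs₂.trans hrhs₁⟩)

def queryThen (S : Finset Rule) (next : Finset (ℕ × Option ℕ) → LTree) :
    List ℕ → Finset (ℕ × Option ℕ) → LTree
  | [], α => next α
  | a :: B, α =>
    if ∃ v, (a, v) ∈ α then queryThen S next B α
    else .node a (allowed S true a).toList fun l =>
      queryThen S next B (insert (a, normv (R_AD S) a l) α)

def buildTree (S : Finset Rule) : ℕ → Finset (ℕ × Option ℕ) → LTree
  | 0, α => .leaf (answerOf S α)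
  | fuel + 1, α =>
    if dPar (residual (R_AD S) α) = 0 then .leaf (answerOf S α)
    else queryThen S (buildTree S fuel) (minCover (Splus (residual (R_AD S) α))).toList α

def SolvesWithin (S : Finset Rule) (α : Finset (ℕ × Option ℕ)) (c : ℕ) (t : LTree) : Prop :=
  t.height ≤ c ∧ ∀ E, α = normImage (R_AD S) E → t.SolvesEADAfter S E

lemma solvesWithin_leaf (hwf : ∀ r ∈ S, r.WF) {α : Finset (ℕ × Option ℕ)}
    (hd : dPar (residual (R_AD S) α) = 0) (c : ℕ) : SolvesWithin S α c (.leaf (answerOf S α)) :=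
  ⟨Nat.zero_le c, fun _ hαE =>
    .leaf (Finset.filter_subset _ _) (isADAnswer_answerOf hwf hαE hd)⟩

lemma solvesWithin_node {a : ℕ} (ha : a ∈ attrs (R_AD S)) {α : Finset (ℕ × Option ℕ)} {c : ℕ}
    {kid : Option ℕ → LTree}
    (hkid : ∀ l, SolvesWithin S (insert (a, normv (R_AD S) a l) α) c (kid l)) :
    SolvesWithin S α (c + 1) (.node a (allowed S true a).toList kid) := by
  refine ⟨?_, fun E hαE => .node (attrs_mono (R_AD_subset S) ha) rfl fun l _ => ?_⟩
  · have := Finset.sup_le (f := fun l => (kid l).height) (s := (allowed S true a).toList.toFinset)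
      fun l _ => (hkid l).1
    simp only [LTree.height]
    omega
  · exact (hkid l).2 _ (by rw [normImage_insert, hαE])

lemma solvesWithin_queryThen {next : Finset (ℕ × Option ℕ) → LTree} {c : ℕ}
    {Q : Finset (ℕ × Option ℕ) → Prop}
    (hnext : ∀ α ∈ ESys (R_AD S) true, Q α → SolvesWithin S α c (next α)) :
    ∀ (B : List ℕ), (∀ a ∈ B, a ∈ attrs (R_AD S)) → ∀ α ∈ ESys (R_AD S) true,
      (∀ α' ∈ ESys (R_AD S) true, α ⊆ α' → (∀ a ∈ B, ∃ v, (a, v) ∈ α') → Q α') →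
      SolvesWithin S α (B.length + c) (queryThen S next B α)
  | [], _, α, hα, hQ => by
    simpa [queryThen] using hnext α hα (hQ α hα subset_rfl (by simp))
  | a :: B, hB, α, hα, hQ => by
    have hB' : ∀ b ∈ B, b ∈ attrs (R_AD S) := fun b hb => hB b (List.mem_cons_of_mem _ hb)
    by_cases hfix : ∃ v, (a, v) ∈ α
    · rw [queryThen, if_pos hfix]
      obtain ⟨hheight, hsolves⟩ := solvesWithin_queryThen hnext B hB' α hα
        fun α' hα' hsub hBα' => hQ α' hα' hsub fun b hb => (List.mem_cons.1 hb).elim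
          (fun hba => hba ▸ hfix.imp fun _ hv => hsub hv) (hBα' b)
      exact ⟨hheight.trans (by simp only [List.length_cons]; omega), hsolves⟩
    · rw [queryThen, if_neg hfix, List.length_cons, Nat.add_right_comm]
      refine solvesWithin_node (hB a List.mem_cons_self) fun l => ?_
      refine solvesWithin_queryThen hnext B hB' _
        (insert_mem_ESys hα (hB a List.mem_cons_self) hfix l) fun α' hα' hsub hBα' => ?_
      refine hQ α' hα' ((Finset.subset_insert _ _).trans hsub) fun b hb => ?_
      rcases List.mem_cons.1 hb with rfl | hb
      · exact ⟨_, hsub (Finset.mem_insert_self _ _)⟩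
      · exact hBα' b hb

lemma solvesWithin_buildTree (hwf : ∀ r ∈ S, r.WF) (fuel : ℕ) {α : Finset (ℕ × Option ℕ)}
    (hα : α ∈ ESys (R_AD S) true) (hd : dPar (residual (R_AD S) α) ≤ fuel) :
    SolvesWithin S α (fuel * beta_EADplus (R_AD S)) (buildTree S fuel α) := by
  induction fuel generalizing α with
  | zero => exact solvesWithin_leaf hwf (Nat.le_zero.1 hd) _
  | succ fuel ih =>
    by_cases hd0 : dPar (residual (R_AD S) α) = 0
    · rw [buildTree, if_pos hd0]
      exact solvesWithin_leaf hwf hd0 _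
    rw [buildTree, if_neg hd0]
    obtain ⟨hcover, hcard⟩ := minCover_spec (Splus (residual (R_AD S) α))
    obtain ⟨hheight, hsolves⟩ := solvesWithin_queryThen
      (Q := fun α' => dPar (residual (R_AD S) α') ≤ fuel) (fun α' hα' hd' => ih hα' hd') _
      (fun a ha => attrs_Splus_residual_subset (hcover.1 (Finset.mem_toList.1 ha))) α hα
      fun α' hα' hsub hB => by
        have := dPar_residual_lt hsub hα'.1 hcover (fun a ha => hB a (Finset.mem_toList.2 ha))
          (Nat.pos_of_ne_zero hd0)
        omega
    refine ⟨hheight.trans ?_, hsolves⟩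
    have := betaPlus_residual_le hα
    rw [Finset.length_toList, hcard, Nat.succ_mul]
    exact (Nat.add_comm _ _).le.trans (Nat.add_le_add_left this _)

lemma exists_treeSolvesEAD_depth_le (hwf : ∀ r ∈ S, r.WF) :
    ∃ G, TreeSolvesEAD S G ∧ G.depth ≤ dPar (R_AD S) * beta_EADplus (R_AD S) := by
  obtain ⟨hheight, hsolves⟩ := solvesWithin_buildTree hwf (dPar (R_AD S))
    (empty_mem_ESys _ _) dPar_residual_le
  have hS := hsolves ∅ (by simp [normImage])
  exact ⟨_, hS.treeSolvesEAD_toDGraph, hS.depth_toDGraph_le.trans hheight⟩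

end Construction

lemma le_h_EAD {S : Finset Rule} {n : ℕ} (hne : ∃ G, TreeSolvesEAD S G)
    (h : ∀ G, TreeSolvesEAD S G → n ≤ G.depth) : n ≤ h_EAD S := by
  obtain ⟨G, hG⟩ := hne
  exact le_csInf ⟨G.depth, G, hG, rfl⟩ fun _ ⟨G', hG', hm⟩ => hm ▸ h G' hG'

lemma h_EAD_le {S : Finset Rule} {G : DGraph} (hG : TreeSolvesEAD S G) : h_EAD S ≤ G.depth :=
  Nat.sInf_le ⟨G, hG, rfl⟩

theorem statement_18_general (S : Finset Rule) (hwf : ∀ r ∈ S, r.WF) :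
    max (dPar (R_AD S)) (beta_EAD (R_AD S)) ≤ h_EAD S ∧
    h_EAD S ≤ dPar (R_AD S) * beta_EADplus (R_AD S) := by
  obtain ⟨G, hG, hdepth⟩ := exists_treeSolvesEAD_depth_le hwf
  refine ⟨le_h_EAD ⟨G, hG⟩ fun G' hG' => ?_, (h_EAD_le hG).trans hdepth⟩
  exact max_le (dPar_R_AD_le_depth hwf hG') (beta_EAD_R_AD_le_depth hwf hG')

/-- Theorem 4(d): with S′ = R_AD(S),
max{d(S′), β_EAD(S′)} ≤ h_EAD(S) ≤ d(S′)·β_EAD⁺(S′). -/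
theorem statement_18 (S : Finset Rule) (hS : S.Nonempty) (hwf : ∀ r ∈ S, r.WF)
    (hn : 0 < nPar S) :
    max (dPar (R_AD S)) (beta_EAD (R_AD S)) ≤ h_EAD S ∧
    h_EAD S ≤ dPar (R_AD S) * beta_EADplus (R_AD S) :=
  statement_18_general S hwf

end DRS

end
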